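/- arXiv:1702.05475 — 10 statements merged into one kernel-verified Lean document; each statement's English description precedes it below -/
import Mathlib

section
/- Let λ > 0, T > 0 and let r₁ < 0 < r₂ be real numbers. Set C = (r₂ − 1)/(1 − r₁) and define y(t) = ( r₂ + r₁ C e^{(t−T)λ(r₂−r₁)} ) / ( 1 + C e^{(t−T)λ(r₂−r₁)} ) for t ∈ [0,T]. Then the denominator 1 + C e^{(t−T)λ(r₂−r₁)} is strictly positive on [0,T], y is differentiable, y(T) = 1, and y satisfies the Riccati equation y'(t) = λ ( y(t) − r₁ )( y(t) − r₂ ) = λ ( y(t)² − a y(t) − b ) on [0,T], where a = r₁ + r₂ and b = −r₁ r₂. -/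
/-!
With `E(t) = exp ((t - T) λ (r₂ - r₁))` we have `E' = λ (r₂ - r₁) E`, and the quotient rule gives
`y' = -λ (r₂ - r₁)² C E / (1 + C E)² = λ (y - r₁)(y - r₂)`, since `y - r₁ = (r₂ - r₁) / (1 + C E)` and
`y - r₂ = (r₁ - r₂) C E / (1 + C E)`. The choice of `C` is exactly `y(T) = 1`. Finally `C > -1`
because `r₁ < r₂`, and `0 < E ≤ 1` on `t ≤ T`, so the denominator stays positive.
-/

open Real

noncomputable def riccatiSol (lam r₁ r₂ C T t : ℝ) : ℝ :=
  (r₂ + r₁ * C * exp ((t - T) * lam * (r₂ - r₁))) / (1 + C * exp ((t - T) * lam * (r₂ - r₁)))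

theorem hasDerivAt_riccatiSol (lam r₁ r₂ C T t : ℝ)
    (hden : 1 + C * exp ((t - T) * lam * (r₂ - r₁)) ≠ 0) :
    HasDerivAt (riccatiSol lam r₁ r₂ C T)
      (lam * (riccatiSol lam r₁ r₂ C T t - r₁) * (riccatiSol lam r₁ r₂ C T t - r₂)) t := by
  have hE : HasDerivAt (fun s => exp ((s - T) * lam * (r₂ - r₁)))
      (exp ((t - T) * lam * (r₂ - r₁)) * (lam * (r₂ - r₁))) t := by
    convert ((((hasDerivAt_id' t).sub_const T).mul_const lam).mul_const (r₂ - r₁)).exp using 1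
    ring
  refine (((hE.const_mul (r₁ * C)).const_add r₂).div
    ((hE.const_mul C).const_add 1) hden).congr_deriv ?_
  simp only [riccatiSol]
  field_simp
  ring

theorem riccatiSol_self (lam r₁ r₂ T : ℝ) (hr₁ : r₁ ≠ 1) (hr : r₁ ≠ r₂) :
    riccatiSol lam r₁ r₂ ((r₂ - 1) / (1 - r₁)) T T = 1 := by
  have h1r₁ : 1 - r₁ ≠ 0 := sub_ne_zero.mpr hr₁.symm
  have h1C : 1 + (r₂ - 1) / (1 - r₁) = (r₂ - r₁) / (1 - r₁) := by field_simp; ring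
  simp only [riccatiSol, sub_self, zero_mul, exp_zero, mul_one]
  rw [div_eq_one_iff_eq (by rw [h1C]; exact div_ne_zero (sub_ne_zero.mpr hr.symm) h1r₁)]
  field_simp
  ring

theorem neg_one_lt_div_of_lt (r₁ r₂ : ℝ) (hr₁ : r₁ < 1) (hr : r₁ < r₂) :
    -1 < (r₂ - 1) / (1 - r₁) := by
  rw [lt_div_iff₀ (by linarith)]
  linarith

theorem one_add_mul_exp_pos (C c : ℝ) (hC : -1 < C) (hc : c ≤ 0) : 0 < 1 + C * exp c := by
  have hE1 : exp c ≤ 1 := exp_le_one_iff.mpr hc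
  have hE0 : 0 < exp c := exp_pos c
  rcases le_or_gt 0 C with h | h <;> nlinarith

theorem stmt_5_general (lam T : ℝ) (hlam : 0 < lam)
    (r₁ r₂ : ℝ) (hr₁ : r₁ < 0) (hr₂ : 0 < r₂)
    (C : ℝ) (hC : C = (r₂ - 1) / (1 - r₁))
    (y : ℝ → ℝ)
    (hy : ∀ t, y t = (r₂ + r₁ * C * Real.exp ((t - T) * lam * (r₂ - r₁))) /
      (1 + C * Real.exp ((t - T) * lam * (r₂ - r₁))))
    (a b : ℝ) (ha : a = r₁ + r₂) (hb : b = -(r₁ * r₂)) :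
    (∀ t ∈ Set.Icc (0 : ℝ) T, 0 < 1 + C * Real.exp ((t - T) * lam * (r₂ - r₁))) ∧
    y T = 1 ∧
    (∀ t ∈ Set.Icc (0 : ℝ) T,
      HasDerivAt y (lam * (y t - r₁) * (y t - r₂)) t ∧
      lam * (y t - r₁) * (y t - r₂) = lam * ((y t) ^ 2 - a * y t - b)) := by
  obtain rfl : y = riccatiSol lam r₁ r₂ C T := funext hy
  have hden : ∀ t ∈ Set.Icc (0 : ℝ) T, 0 < 1 + C * exp ((t - T) * lam * (r₂ - r₁)) := by
    intro t ht
    refine one_add_mul_exp_pos C _ (hC ▸ neg_one_lt_div_of_lt r₁ r₂ (by linarith) (by linarith)) ?_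
    exact mul_nonpos_of_nonpos_of_nonneg
      (mul_nonpos_of_nonpos_of_nonneg (by linarith [ht.2]) hlam.le) (by linarith)
  refine ⟨hden, hC ▸ riccatiSol_self lam r₁ r₂ T (by linarith) (by linarith), fun t ht => ⟨?_, ?_⟩⟩
  · exact hasDerivAt_riccatiSol lam r₁ r₂ C T t (hden t ht).ne'
  · rw [ha, hb]; ring

/-- The explicit solution of the Riccati equation `y' = λ(y² − a y − b)` with the
terminal condition `y(T) = 1`. -/
theorem stmt_5 (lam T : ℝ) (hlam : 0 < lam) (hT : 0 < T)
    (r₁ r₂ : ℝ) (hr₁ : r₁ < 0) (hr₂ : 0 < r₂)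
    (C : ℝ) (hC : C = (r₂ - 1) / (1 - r₁))
    (y : ℝ → ℝ)
    (hy : ∀ t, y t = (r₂ + r₁ * C * Real.exp ((t - T) * lam * (r₂ - r₁))) /
      (1 + C * Real.exp ((t - T) * lam * (r₂ - r₁))))
    (a b : ℝ) (ha : a = r₁ + r₂) (hb : b = -(r₁ * r₂)) :
    (∀ t ∈ Set.Icc (0 : ℝ) T, 0 < 1 + C * Real.exp ((t - T) * lam * (r₂ - r₁))) ∧
    y T = 1 ∧
    (∀ t ∈ Set.Icc (0 : ℝ) T,
      HasDerivAt y (lam * (y t - r₁) * (y t - r₂)) t ∧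
      lam * (y t - r₁) * (y t - r₂) = lam * ((y t) ^ 2 - a * y t - b)) :=
  stmt_5_general lam T hlam r₁ r₂ hr₁ hr₂ C hC y hy a b ha hb
end

section
/- Fix λ, μ, T > 0, α ∈ (0,T), and set a = 1 − μ/λ. For each r₂ > max(a,1) let r₁ = a − r₂ and define y_{r₂}(t) = ( r₂(1−r₁) + r₁(r₂−1) φ(t) ) / ( 1 − r₁ + (r₂−1) φ(t) ) where φ(t) = e^{(t−T)λ(r₂−r₁)}. Then sup_{t ∈ [0, T−α]} | y_{r₂}(t) − r₂ | tends to 0 as r₂ → ∞. -/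
/-!
Writing `r₁ = a - r₂` and `φ(t) = exp ((t - T) λ (r₂ - r₁))`, one has
`y_{r₂}(t) - r₂ = (r₁ - r₂)(r₂ - 1) φ(t) / (1 - r₁ + (r₂ - 1) φ(t))`, and the denominator is at
least `1`, so `|y_{r₂}(t) - r₂| ≤ (r₂ - r₁)² φ(t)`. For `t ≤ T - α` we have
`φ(t) ≤ exp (-α λ (r₂ - r₁))`, and `s² exp (-α λ s) → 0` as `s = r₂ - r₁ = 2 r₂ - a → ∞`.
-/

open Filter Topology Real

theorem riccati_solution_sub_eq (r₁ r₂ φ : ℝ) (hD : 1 - r₁ + (r₂ - 1) * φ ≠ 0) :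
    (r₂ * (1 - r₁) + r₁ * (r₂ - 1) * φ) / (1 - r₁ + (r₂ - 1) * φ) - r₂ =
      (r₁ - r₂) * (r₂ - 1) * φ / (1 - r₁ + (r₂ - 1) * φ) := by
  field_simp
  ring

theorem abs_riccati_solution_sub_le {r₁ r₂ φ : ℝ} (hr₁ : r₁ ≤ 0) (hr₂ : 1 ≤ r₂) (hφ : 0 ≤ φ) :
    |(r₂ * (1 - r₁) + r₁ * (r₂ - 1) * φ) / (1 - r₁ + (r₂ - 1) * φ) - r₂| ≤
      (r₂ - r₁) ^ 2 * φ := by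
  have hD : 1 ≤ 1 - r₁ + (r₂ - 1) * φ := by nlinarith
  have hr₂1 : 0 ≤ r₂ - 1 := by linarith
  have hr₂r₁ : r₂ - 1 ≤ r₂ - r₁ := by linarith
  have hs : 0 ≤ r₂ - r₁ := hr₂1.trans hr₂r₁
  rw [riccati_solution_sub_eq r₁ r₂ φ (by linarith), abs_div, abs_of_pos (zero_lt_one.trans_le hD),
    abs_mul, abs_mul, abs_of_nonneg hφ, abs_of_nonneg hr₂1, abs_sub_comm, abs_of_nonneg hs]
  calc (r₂ - r₁) * (r₂ - 1) * φ / (1 - r₁ + (r₂ - 1) * φ) ≤ (r₂ - r₁) * (r₂ - 1) * φ :=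
        div_le_self (by positivity) hD
    _ ≤ (r₂ - r₁) ^ 2 * φ := by
        rw [sq]
        gcongr

theorem tendsto_affine_sq_mul_exp_neg_mul_atTop {c : ℝ} (hc : 0 < c) (a : ℝ) :
    Tendsto (fun r : ℝ => (2 * r - a) ^ 2 * exp (-c * (2 * r - a))) atTop (𝓝 0) := by
  have hlin : Tendsto (fun r : ℝ => 2 * r - a) atTop atTop :=
    tendsto_atTop_add_const_right _ (-a) (tendsto_id.const_mul_atTop two_pos)
  simpa only [Function.comp_def, rpow_two] using
    (tendsto_rpow_mul_exp_neg_mul_atTop_nhds_zero 2 c hc).comp hlin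

theorem stmt_9_general (lam T α : ℝ) (hlam : 0 < lam)
    (hα0 : 0 < α)
    (a : ℝ)
    (y : ℝ → ℝ → ℝ)
    (hy : ∀ r₂ t, y r₂ t =
      (r₂ * (1 - (a - r₂)) +
        (a - r₂) * (r₂ - 1) * Real.exp ((t - T) * lam * (r₂ - (a - r₂)))) /
      (1 - (a - r₂) + (r₂ - 1) * Real.exp ((t - T) * lam * (r₂ - (a - r₂))))) :
    ∀ ε > 0, ∃ R : ℝ, ∀ r₂ : ℝ, max a 1 < r₂ → R ≤ r₂ →
      ∀ t ∈ Set.Icc (0 : ℝ) (T - α), |y r₂ t - r₂| < ε := by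
  intro ε hε
  obtain ⟨R, hR⟩ := eventually_atTop.mp
    ((tendsto_affine_sq_mul_exp_neg_mul_atTop (mul_pos hα0 hlam) a).eventually (gt_mem_nhds hε))
  refine ⟨R, fun r₂ hr₂ hRr₂ t ht => ?_⟩
  obtain ⟨har₂, h1r₂⟩ := max_lt_iff.mp hr₂
  have hs : r₂ - (a - r₂) = 2 * r₂ - a := by ring
  calc |y r₂ t - r₂|
      ≤ (r₂ - (a - r₂)) ^ 2 * exp ((t - T) * lam * (r₂ - (a - r₂))) := by
        rw [hy]
        exact abs_riccati_solution_sub_le (by linarith) h1r₂.le (exp_pos _).le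
    _ ≤ (2 * r₂ - a) ^ 2 * exp (-(α * lam) * (2 * r₂ - a)) := by
        rw [hs]
        gcongr ?_ * exp (?_ * _)
        · linarith
        · rw [neg_mul_eq_neg_mul]
          exact mul_le_mul_of_nonneg_right (by linarith [ht.2]) hlam.le
    _ < ε := hR r₂ hRr₂

/-- Uniform convergence `y_{r₂}(t) → r₂` on `[0, T−α]` as `r₂ → ∞`. -/
theorem stmt_9 (lam mu T α : ℝ) (hlam : 0 < lam) (hmu : 0 < mu) (hT : 0 < T)
    (hα0 : 0 < α) (hαT : α < T)
    (a : ℝ) (ha : a = 1 - mu / lam)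
    (y : ℝ → ℝ → ℝ)
    (hy : ∀ r₂ t, y r₂ t =
      (r₂ * (1 - (a - r₂)) +
        (a - r₂) * (r₂ - 1) * Real.exp ((t - T) * lam * (r₂ - (a - r₂)))) /
      (1 - (a - r₂) + (r₂ - 1) * Real.exp ((t - T) * lam * (r₂ - (a - r₂))))) :
    ∀ ε > 0, ∃ R : ℝ, ∀ r₂ : ℝ, max a 1 < r₂ → R ≤ r₂ →
      ∀ t ∈ Set.Icc (0 : ℝ) (T - α), |y r₂ t - r₂| < ε :=
  stmt_9_general lam T α hlam hα0 a y hy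
end

section
/- Fix λ, μ, T > 0, α ∈ (0,T), and set a = 1 − μ/λ. For each r₂ > max(a,1) let r₁ = a − r₂, let w = ( λ r₂² + (μ−λ) r₂ ) / μ, define y_{r₂}(t) = ( r₂(1−r₁) + r₁(r₂−1) φ(t) ) / ( 1 − r₁ + (r₂−1) φ(t) ) with φ(t) = e^{(t−T)λ(r₂−r₁)}, and z_{r₂}(t) = w / y_{r₂}(t). Then sup_{t ∈ [0, T−α]} | z_{r₂}(t)/r₂ − λ/μ | tends to 0 as r₂ → ∞. -/
/-!
Write `r₁ = a − r₂` and `φ = exp((t − T) λ (r₂ − r₁))`. The value `y_{r₂}(t)` is the average of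
`r₂` and `r₁` with weights `1 − r₁` and `(r₂ − 1) φ`, so `0 ≤ r₂ − y ≤ (r₂ − r₁) φ`. For
`t ≤ T − α` this gap is at most `s e^{−αλ s}` with `s = r₂ − r₁ = 2 r₂ − a`, which tends to `0`
uniformly in `t`. Since `z / r₂ − λ/μ = (λ (r₂ − y) + μ − λ) / (μ y)`, the error is then bounded
by a function of `r₂` alone which tends to `0`.
-/

open Filter Topology Real

section RiccatiSolution

variable {a r φ : ℝ}

theorem sub_riccati_eq (hden : 1 - (a - r) + (r - 1) * φ ≠ 0) :
    r - (r * (1 - (a - r)) + (a - r) * (r - 1) * φ) / (1 - (a - r) + (r - 1) * φ) =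
      (r - (a - r)) * ((r - 1) * φ / (1 - (a - r) + (r - 1) * φ)) := by
  field_simp
  ring

theorem sub_riccati_mem_Icc (ha : a ≤ 2) (hr : 1 < r) (hφ : 0 ≤ φ) :
    r - (r * (1 - (a - r)) + (a - r) * (r - 1) * φ) / (1 - (a - r) + (r - 1) * φ) ∈
      Set.Icc 0 ((r - (a - r)) * φ) := by
  have hq : 0 ≤ (r - 1) * φ := mul_nonneg (by linarith) hφ
  have hden : 0 < 1 - (a - r) + (r - 1) * φ := by linarith
  have hθ0 : 0 ≤ (r - 1) * φ / (1 - (a - r) + (r - 1) * φ) := div_nonneg hq hden.le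
  have hθφ : (r - 1) * φ / (1 - (a - r) + (r - 1) * φ) ≤ φ := by
    rw [div_le_iff₀ hden]
    nlinarith [mul_nonneg hφ hq]
  rw [sub_riccati_eq hden.ne']
  exact ⟨mul_nonneg (by linarith) hθ0, mul_le_mul_of_nonneg_left hθφ (by linarith)⟩

end RiccatiSolution

theorem exp_mul_le_exp_neg_mul {t T α c : ℝ} (ht : t ≤ T - α) (hc : 0 ≤ c) :
    exp ((t - T) * c) ≤ exp (-α * c) :=
  exp_le_exp.2 (mul_le_mul_of_nonneg_right (by linarith) hc)

theorem abs_div_div_div_sub_le {lam mu r y δ : ℝ} (hlam : 0 ≤ lam) (hmu : 0 < mu)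
    (hy : 0 ≤ r - y) (hyδ : r - y ≤ δ) (hδr : δ < r) :
    |(lam * r ^ 2 + (mu - lam) * r) / mu / y / r - lam / mu| ≤
      (lam * δ + |mu - lam|) / (mu * (r - δ)) := by
  have hy0 : 0 < y := by linarith
  have hr0 : 0 < r := by linarith
  have heq : (lam * r ^ 2 + (mu - lam) * r) / mu / y / r - lam / mu =
      (lam * (r - y) + (mu - lam)) / (mu * y) := by
    field_simp
    ring
  rw [heq, abs_div, abs_of_pos (mul_pos hmu hy0)]
  refine div_le_div₀ (add_nonneg (mul_nonneg hlam (hy.trans hyδ)) (abs_nonneg _)) ?_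
    (mul_pos hmu (by linarith)) (by gcongr; linarith)
  calc |lam * (r - y) + (mu - lam)| ≤ |lam * (r - y)| + |mu - lam| := abs_add_le _ _
    _ ≤ lam * δ + |mu - lam| := by
      rw [abs_of_nonneg (mul_nonneg hlam hy)]
      gcongr

theorem stmt_10_general (lam mu T α : ℝ) (hlam : 0 < lam) (hmu : 0 < mu)
    (hα0 : 0 < α)
    (a : ℝ) (ha : a = 1 - mu / lam)
    (y z : ℝ → ℝ → ℝ)
    (hy : ∀ r₂ t, y r₂ t =
      (r₂ * (1 - (a - r₂)) +
        (a - r₂) * (r₂ - 1) * Real.exp ((t - T) * lam * (r₂ - (a - r₂)))) /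
      (1 - (a - r₂) + (r₂ - 1) * Real.exp ((t - T) * lam * (r₂ - (a - r₂)))))
    (hz : ∀ r₂ t, z r₂ t = ((lam * r₂ ^ 2 + (mu - lam) * r₂) / mu) / y r₂ t) :
    ∀ ε > 0, ∃ R : ℝ, ∀ r₂ : ℝ, max a 1 < r₂ → R ≤ r₂ →
      ∀ t ∈ Set.Icc (0 : ℝ) (T - α), |z r₂ t / r₂ - lam / mu| < ε := by
  intro ε hε
  have ha2 : a ≤ 2 := by rw [ha]; linarith [div_pos hmu hlam]
  have hs : Tendsto (fun r : ℝ => r - (a - r)) atTop atTop :=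
    tendsto_atTop_atTop.2 fun b => ⟨(b + a) / 2, fun r hr => by linarith⟩
  set δ : ℝ → ℝ := fun r => (r - (a - r)) * exp (-(α * lam) * (r - (a - r)))
  have hdecay : Tendsto (fun s => s * exp (-(α * lam) * s)) atTop (𝓝 0) :=
    (tendsto_rpow_mul_exp_neg_mul_atTop_nhds_zero 1 _ (mul_pos hα0 hlam)).congr
      fun s => by rw [rpow_one]
  have hδ : Tendsto δ atTop (𝓝 0) := hdecay.comp hs
  have hgap : Tendsto (fun r => r - δ r) atTop atTop := by
    simpa only [sub_eq_add_neg, id] using tendsto_id.atTop_add hδ.neg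
  have hbound : Tendsto (fun r => (lam * δ r + |mu - lam|) / (mu * (r - δ r))) atTop (𝓝 0) :=
    ((hδ.const_mul lam).add_const _).div_atTop (hgap.const_mul_atTop hmu)
  obtain ⟨R, hR⟩ := eventually_atTop.1
    ((hbound.eventually (gt_mem_nhds hε)).and (hgap.eventually_gt_atTop 0))
  refine ⟨R, fun r hr hRr t ht => ?_⟩
  obtain ⟨hB, hpos⟩ := hR r hRr
  have hr1 : 1 < r := (le_max_right a 1).trans_lt hr
  have hφ : exp ((t - T) * lam * (r - (a - r))) ≤ exp (-(α * lam) * (r - (a - r))) := by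
    simpa only [mul_assoc, neg_mul] using
      exp_mul_le_exp_neg_mul ht.2 (mul_nonneg hlam.le (by linarith : 0 ≤ r - (a - r)))
  obtain ⟨hgap0, hgapφ⟩ := sub_riccati_mem_Icc ha2 hr1 (exp_pos ((t - T) * lam * (r - (a - r)))).le
  rw [← hy] at hgap0 hgapφ
  rw [hz]
  refine (abs_div_div_div_sub_le hlam.le hmu hgap0 (hgapφ.trans ?_) (by linarith)).trans_lt hB
  exact mul_le_mul_of_nonneg_left hφ (by linarith)

/-- Uniform convergence `z_{r₂}(t)/r₂ → λ/μ` on `[0, T−α]` as `r₂ → ∞`. -/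
theorem stmt_10 (lam mu T α : ℝ) (hlam : 0 < lam) (hmu : 0 < mu) (hT : 0 < T)
    (hα0 : 0 < α) (hαT : α < T)
    (a : ℝ) (ha : a = 1 - mu / lam)
    (y z : ℝ → ℝ → ℝ)
    (hy : ∀ r₂ t, y r₂ t =
      (r₂ * (1 - (a - r₂)) +
        (a - r₂) * (r₂ - 1) * Real.exp ((t - T) * lam * (r₂ - (a - r₂)))) /
      (1 - (a - r₂) + (r₂ - 1) * Real.exp ((t - T) * lam * (r₂ - (a - r₂)))))
    (hz : ∀ r₂ t, z r₂ t = ((lam * r₂ ^ 2 + (mu - lam) * r₂) / mu) / y r₂ t) :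
    ∀ ε > 0, ∃ R : ℝ, ∀ r₂ : ℝ, max a 1 < r₂ → R ≤ r₂ →
      ∀ t ∈ Set.Icc (0 : ℝ) (T - α), |z r₂ t / r₂ - lam / mu| < ε :=
  stmt_10_general lam mu T α hlam hmu hα0 a ha y z hy hz
end

section
/- Let S > 0, ε ∈ [0,1), and let ε₁, ε₂ : [0,S] → ℝ be continuous with |ε₁(τ)| ≤ ε and |ε₂(τ)| ≤ ε for all τ. Suppose f : [0,S] → ℝ is differentiable, f(0) ∈ [0,1], and f'(τ) = (1 + ε₁(τ))(1 − f(τ)) − (1 + ε₂(τ)) f(τ) for all τ ∈ [0,S]. Then f(τ) ∈ [0,1] for all τ ∈ [0,S], and moreover | f(τ) − 1/2 | ≤ (1/2) e^{−2τ} + ε/2 for all τ ∈ [0,S]. -/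
/-!
The equation is `f' = p (1 - f) - q f` with `p = 1 + ε₁ > 0` and `q = 1 + ε₂ > 0`, so `f` is pushed
up on the level `0` and down on the level `1`: the interval `[0, 1]` is invariant. Inside it,
`x = f - 1/2` satisfies `x' = -2x + ε₁ (1 - f) - ε₂ f` with a perturbation of size at most `ε`,
and the integrating factor `e^{2τ}` turns this into the estimate `|x τ| ≤ e^{-2τ} |x 0| + ε/2`.
-/

open Set Real

theorem mem_Icc_of_hasDerivAt_twoState {a b : ℝ} {p q f : ℝ → ℝ}
    (hp : ∀ t ∈ Icc a b, 0 < p t) (hq : ∀ t ∈ Icc a b, 0 < q t)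
    (hf : ∀ t ∈ Icc a b, HasDerivAt f (p t * (1 - f t) - q t * f t) t)
    (ha : f a ∈ Icc 0 1) : ∀ t ∈ Icc a b, f t ∈ Icc 0 1 := by
  have hcont : ContinuousOn f (Icc a b) := HasDerivAt.continuousOn hf
  have hf' : ∀ t ∈ Ico a b, HasDerivWithinAt f (p t * (1 - f t) - q t * f t) (Ici t) t :=
    fun t ht ↦ (hf t (Ico_subset_Icc_self ht)).hasDerivWithinAt
  have hconst (c : ℝ) : ∀ t ∈ Ico a b, HasDerivWithinAt (fun _ ↦ c) 0 (Ici t) t :=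
    fun t _ ↦ hasDerivWithinAt_const t _ c
  intro t ht
  constructor
  · refine image_le_of_deriv_right_lt_deriv_boundary' continuousOn_const (hconst 0) ha.1
      hcont hf' (fun s hs hfs ↦ ?_) ht
    simpa [← hfs] using hp s (Ico_subset_Icc_self hs)
  · refine image_le_of_deriv_right_lt_deriv_boundary' hcont hf' ha.2 continuousOn_const
      (hconst 1) (fun s hs hfs ↦ ?_) ht
    simpa [hfs] using hq s (Ico_subset_Icc_self hs)

theorem sub_div_le_exp_mul_of_deriv_add_mul_le {a b k δ : ℝ} {x x' : ℝ → ℝ} (hk : k ≠ 0)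
    (hx : ∀ t ∈ Icc a b, HasDerivAt x (x' t) t) (h : ∀ t ∈ Icc a b, x' t + k * x t ≤ δ) :
    ∀ t ∈ Icc a b, x t - δ / k ≤ exp (-k * (t - a)) * (x a - δ / k) := by
  set g : ℝ → ℝ := fun t ↦ exp (k * t) * (x t - δ / k)
  have hg : ∀ t ∈ Icc a b, HasDerivAt g (exp (k * t) * (x' t + k * x t - δ)) t := by
    intro t ht
    have hexp : HasDerivAt (fun t ↦ exp (k * t)) (exp (k * t) * (k * 1)) t :=
      ((hasDerivAt_id' t).const_mul k).exp
    refine (hexp.mul ((hx t ht).sub_const (δ / k))).congr_deriv ?_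
    field_simp
    ring
  have hanti : AntitoneOn g (Icc a b) := by
    refine antitoneOn_of_hasDerivWithinAt_nonpos (convex_Icc a b) (HasDerivAt.continuousOn hg)
      (fun t ht ↦ (hg t (interior_subset ht)).hasDerivWithinAt) fun t ht ↦ ?_
    exact mul_nonpos_of_nonneg_of_nonpos (exp_pos _).le
      (sub_nonpos.mpr (h t (interior_subset ht)))
  intro t ht
  have hga : g t ≤ g a := hanti ⟨le_rfl, ht.1.trans ht.2⟩ ht ht.1
  calc x t - δ / k = exp (-k * t) * g t := by simp only [g, ← mul_assoc, ← exp_add]; simp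
    _ ≤ exp (-k * t) * g a := by gcongr
    _ = exp (-k * (t - a)) * (x a - δ / k) := by simp only [g, ← mul_assoc, ← exp_add]; ring_nf

theorem abs_le_exp_mul_abs_add_of_abs_deriv_add_mul_le {a b k δ : ℝ} {x x' : ℝ → ℝ}
    (hk : 0 < k) (hx : ∀ t ∈ Icc a b, HasDerivAt x (x' t) t)
    (h : ∀ t ∈ Icc a b, |x' t + k * x t| ≤ δ) :
    ∀ t ∈ Icc a b, |x t| ≤ exp (-k * (t - a)) * |x a| + δ / k := by
  intro t ht
  have hupper := sub_div_le_exp_mul_of_deriv_add_mul_le hk.ne' hx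
    (fun s hs ↦ (abs_le.mp (h s hs)).2) t ht
  have hlower := sub_div_le_exp_mul_of_deriv_add_mul_le (δ := δ) hk.ne'
    (x := fun s ↦ -x s) (fun s hs ↦ (hx s hs).neg)
    (fun s hs ↦ by linarith [(abs_le.mp (h s hs)).1]) t ht
  have hδ : 0 ≤ δ / k := div_nonneg ((abs_nonneg _).trans (h t ht)) hk.le
  have he : 0 ≤ exp (-k * (t - a)) * (δ / k) := mul_nonneg (exp_pos _).le hδ
  have hxa := mul_le_mul_of_nonneg_left (le_abs_self (x a)) (exp_pos (-k * (t - a))).le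
  have hnxa := mul_le_mul_of_nonneg_left (neg_le_abs (x a)) (exp_pos (-k * (t - a))).le
  rw [abs_le]
  constructor <;> linarith

theorem stmt_11_general (S ε : ℝ) (hε : ε ∈ Set.Ico (0 : ℝ) 1)
    (ε₁ ε₂ : ℝ → ℝ)
    (hb₁ : ∀ τ ∈ Set.Icc (0 : ℝ) S, |ε₁ τ| ≤ ε)
    (hb₂ : ∀ τ ∈ Set.Icc (0 : ℝ) S, |ε₂ τ| ≤ ε)
    (f : ℝ → ℝ) (hf0 : f 0 ∈ Set.Icc (0 : ℝ) 1)
    (hf : ∀ τ ∈ Set.Icc (0 : ℝ) S,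
      HasDerivAt f ((1 + ε₁ τ) * (1 - f τ) - (1 + ε₂ τ) * f τ) τ) :
    ∀ τ ∈ Set.Icc (0 : ℝ) S,
      f τ ∈ Set.Icc (0 : ℝ) 1 ∧
      |f τ - 1 / 2| ≤ (1 / 2) * Real.exp (-2 * τ) + ε / 2 := by
  have hpos {e : ℝ → ℝ} (hb : ∀ τ ∈ Icc (0 : ℝ) S, |e τ| ≤ ε) : ∀ τ ∈ Icc 0 S, 0 < 1 + e τ :=
    fun τ hτ ↦ by linarith [(abs_le.mp (hb τ hτ)).1, hε.2]
  have hmem := mem_Icc_of_hasDerivAt_twoState (hpos hb₁) (hpos hb₂) hf hf0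
  have hdrift : ∀ τ ∈ Icc (0 : ℝ) S,
      |(1 + ε₁ τ) * (1 - f τ) - (1 + ε₂ τ) * f τ + 2 * (f τ - 1 / 2)| ≤ ε := by
    intro τ hτ
    obtain ⟨h0, h1⟩ := hmem τ hτ
    calc _ = |ε₁ τ * (1 - f τ) - ε₂ τ * f τ| := by ring_nf
      _ ≤ |ε₁ τ| * (1 - f τ) + |ε₂ τ| * f τ := by
        grw [abs_sub, abs_mul, abs_mul, abs_of_nonneg (sub_nonneg.mpr h1), abs_of_nonneg h0]
      _ ≤ ε * (1 - f τ) + ε * f τ := by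
        gcongr
        exacts [hb₁ τ hτ, hb₂ τ hτ]
      _ = ε := by ring
  intro τ hτ
  refine ⟨hmem τ hτ, ?_⟩
  have hdecay := abs_le_exp_mul_abs_add_of_abs_deriv_add_mul_le two_pos
    (fun t ht ↦ (hf t ht).sub_const (1 / 2)) hdrift τ hτ
  have hx0 : |f 0 - 1 / 2| ≤ 1 / 2 := abs_sub_le_iff.mpr ⟨by linarith [hf0.2], by linarith [hf0.1]⟩
  calc |f τ - 1 / 2| ≤ exp (-2 * (τ - 0)) * |f 0 - 1 / 2| + ε / 2 := hdecay
    _ ≤ 1 / 2 * exp (-2 * τ) + ε / 2 := by rw [sub_zero, mul_comm]; gcongr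

/-- Core estimate for the turnpike theorem: the solution of
`f' = (1+ε₁)(1−f) − (1+ε₂)f` with `f(0) ∈ [0,1]` stays in `[0,1]` and satisfies
`|f(τ) − 1/2| ≤ (1/2)e^{−2τ} + ε/2`. -/
theorem stmt_11 (S ε : ℝ) (hS : 0 < S) (hε : ε ∈ Set.Ico (0 : ℝ) 1)
    (ε₁ ε₂ : ℝ → ℝ)
    (hc₁ : ContinuousOn ε₁ (Set.Icc 0 S)) (hc₂ : ContinuousOn ε₂ (Set.Icc 0 S))
    (hb₁ : ∀ τ ∈ Set.Icc (0 : ℝ) S, |ε₁ τ| ≤ ε)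
    (hb₂ : ∀ τ ∈ Set.Icc (0 : ℝ) S, |ε₂ τ| ≤ ε)
    (f : ℝ → ℝ) (hf0 : f 0 ∈ Set.Icc (0 : ℝ) 1)
    (hf : ∀ τ ∈ Set.Icc (0 : ℝ) S,
      HasDerivAt f ((1 + ε₁ τ) * (1 - f τ) - (1 + ε₂ τ) * f τ) τ) :
    ∀ τ ∈ Set.Icc (0 : ℝ) S,
      f τ ∈ Set.Icc (0 : ℝ) 1 ∧
      |f τ - 1 / 2| ≤ (1 / 2) * Real.exp (-2 * τ) + ε / 2 :=
  stmt_11_general S ε hε ε₁ ε₂ hb₁ hb₂ f hf0 hf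
end

section
/- (Turnpike theorem.) Fix T > 0 and α ∈ (0, T/2). For every ε > 0 there exist Λ₀ > 0 and δ > 0 such that the following holds: if Λ ≥ Λ₀, if A, B : [0,T] → ℝ are continuous functions satisfying |A(t)/Λ − 1| ≤ δ and |B(t)/Λ − 1| ≤ δ for all t ∈ [0, T−α], and if f₁ : [0,T] → ℝ is differentiable with f₁(0) ∈ [0,1] and f₁'(t) = A(t)(1 − f₁(t)) − B(t) f₁(t) for all t ∈ [0, T−α], then | f₁(t) − 1/2 | < ε for all t ∈ [α, T−α]. -/
/-!
Writing `g = f₁ - 1/2`, the equation becomes `g' = (A - B)/2 - (A + B) g`: a linear equation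
whose damping `A + B ≥ Λ` is large and whose forcing `(A - B)/2` is small compared to `Λ`.
Comparison with the barriers `±(c + e^{-Λ t}/2)` shows that `|g|` relaxes to the level `c` at
rate `Λ`, so after time `α` it is below `ε` once `Λ` is large.
-/

open Set Real

theorem le_add_mul_exp_of_hasDerivAt_linear {g p q : ℝ → ℝ} {a b c k M : ℝ}
    (hc : 0 ≤ c) (hM : 0 ≤ M) (hg : ∀ t ∈ Icc a b, HasDerivAt g (p t - q t * g t) t)
    (hp : ∀ t ∈ Icc a b, p t < k * c) (hq : ∀ t ∈ Icc a b, k ≤ q t) (hga : g a ≤ c + M) :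
    ∀ t ∈ Icc a b, g t ≤ c + M * exp (-(k * (t - a))) := by
  have hbarrier : ∀ t, HasDerivAt (fun s ↦ c + M * exp (-(k * (s - a))))
      (-k * (M * exp (-(k * (t - a))))) t := fun t ↦
    ((((hasDerivAt_id' t).sub_const a).const_mul k).fun_neg.exp.const_mul M |>.const_add c)
      |>.congr_deriv (by ring)
  refine image_le_of_deriv_right_lt_deriv_boundary
    (fun t ht ↦ (hg t ht).continuousAt.continuousWithinAt)
    (fun t ht ↦ (hg t (Ico_subset_Icc_self ht)).hasDerivWithinAt) (by simpa using hga)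
    hbarrier ?_
  intro t ht hgt
  have ht' := Ico_subset_Icc_self ht
  -- at a contact point `g ≥ 0`, so the damping `q ≥ k` may be replaced by `k`
  have hdamp : k * g t ≤ q t * g t :=
    mul_le_mul_of_nonneg_right (hq t ht') (hgt ▸ by positivity)
  rw [hgt] at hdamp ⊢
  linarith [hp t ht']

theorem abs_le_add_mul_exp_of_hasDerivAt_linear {g p q : ℝ → ℝ} {a b c k M : ℝ}
    (hc : 0 ≤ c) (hM : 0 ≤ M) (hg : ∀ t ∈ Icc a b, HasDerivAt g (p t - q t * g t) t)
    (hp : ∀ t ∈ Icc a b, |p t| < k * c) (hq : ∀ t ∈ Icc a b, k ≤ q t) (hga : |g a| ≤ c + M) :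
    ∀ t ∈ Icc a b, |g t| ≤ c + M * exp (-(k * (t - a))) := by
  intro t ht
  refine abs_le'.2 ⟨le_add_mul_exp_of_hasDerivAt_linear hc hM hg
    (fun s hs ↦ (le_abs_self _).trans_lt (hp s hs)) hq (le_abs_self _ |>.trans hga) t ht, ?_⟩
  refine le_add_mul_exp_of_hasDerivAt_linear (g := fun s ↦ -g s) (p := fun s ↦ -p s) hc hM
    (fun s hs ↦ (hg s hs).fun_neg.congr_deriv (by ring))
    (fun s hs ↦ (neg_le_abs _).trans_lt (hp s hs)) hq (neg_le_abs _ |>.trans hga) t ht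

theorem abs_sub_le_mul_of_abs_div_sub_one_le {x Λ δ : ℝ} (hΛ : 0 < Λ) (h : |x / Λ - 1| ≤ δ) :
    |x - Λ| ≤ δ * Λ := by
  have hx : x - Λ = (x / Λ - 1) * Λ := by field_simp
  rw [hx, abs_mul, abs_of_pos hΛ]
  exact mul_le_mul_of_nonneg_right h hΛ.le

theorem abs_sub_half_le_of_hasDerivAt_of_rates_near {A B f : ℝ → ℝ} {a b Λ δ c : ℝ}
    (hΛ : 0 < Λ) (hc : 0 ≤ c) (hδ : δ ≤ 1 / 2) (hδc : δ < c)
    (hA : ∀ t ∈ Icc a b, |A t - Λ| ≤ δ * Λ) (hB : ∀ t ∈ Icc a b, |B t - Λ| ≤ δ * Λ)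
    (hfa : f a ∈ Icc 0 1)
    (hf : ∀ t ∈ Icc a b, HasDerivAt f (A t * (1 - f t) - B t * f t) t) :
    ∀ t ∈ Icc a b, |f t - 1 / 2| ≤ c + 1 / 2 * exp (-(Λ * (t - a))) := by
  refine abs_le_add_mul_exp_of_hasDerivAt_linear (g := fun t ↦ f t - 1 / 2)
    (p := fun t ↦ (A t - B t) / 2) (q := fun t ↦ A t + B t) hc (by norm_num) (fun t ht ↦ ?_) (fun t ht ↦ ?_) (fun t ht ↦ ?_) ?_
  · exact ((hf t ht).sub_const (1 / 2)).congr_deriv (by ring)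
  · obtain ⟨hA₁, hA₂⟩ := abs_le.1 (hA t ht)
    obtain ⟨hB₁, hB₂⟩ := abs_le.1 (hB t ht)
    have hδΛ : δ * Λ < Λ * c := by nlinarith
    rw [abs_lt]
    constructor <;> linarith
  · linarith [(abs_le.1 (hA t ht)).1, (abs_le.1 (hB t ht)).1, mul_le_mul_of_nonneg_right hδ hΛ.le]
  · rw [abs_le]
    constructor <;> linarith [hfa.1, hfa.2]

theorem stmt_12_general (T α : ℝ) (hα : α ∈ Set.Ioo 0 (T / 2)) :
    ∀ ε > (0 : ℝ), ∃ Λ₀ > (0 : ℝ), ∃ δ > (0 : ℝ), ∀ Λ : ℝ, Λ₀ ≤ Λ →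
      ∀ A B : ℝ → ℝ,
        ContinuousOn A (Set.Icc 0 T) → ContinuousOn B (Set.Icc 0 T) →
        (∀ t ∈ Set.Icc (0 : ℝ) (T - α), |A t / Λ - 1| ≤ δ) →
        (∀ t ∈ Set.Icc (0 : ℝ) (T - α), |B t / Λ - 1| ≤ δ) →
        ∀ f₁ : ℝ → ℝ, f₁ 0 ∈ Set.Icc (0 : ℝ) 1 →
          (∀ t ∈ Set.Icc (0 : ℝ) (T - α),
            HasDerivAt f₁ (A t * (1 - f₁ t) - B t * f₁ t) t) →
          ∀ t ∈ Set.Icc α (T - α), |f₁ t - 1 / 2| < ε := by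
  intro ε hε
  have hα0 := hα.1
  refine ⟨(|log ε| + 1) / α, by positivity, min (ε / 4) (1 / 2), by positivity, ?_⟩
  intro Λ hΛ A B _ _ hA hB f₁ hf0 hf t ht
  have hΛα : |log ε| + 1 ≤ Λ * α := (div_le_iff₀ hα0).1 hΛ
  have hΛ0 : 0 < Λ := pos_of_mul_pos_left (by linarith [abs_nonneg (log ε)]) hα0.le
  have hbound := abs_sub_half_le_of_hasDerivAt_of_rates_near hΛ0 (c := ε / 2) (by positivity)
    (min_le_right _ _) ((min_le_left _ _).trans_lt (by linarith))
    (fun s hs ↦ abs_sub_le_mul_of_abs_div_sub_one_le hΛ0 (hA s hs))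
    (fun s hs ↦ abs_sub_le_mul_of_abs_div_sub_one_le hΛ0 (hB s hs)) hf0 hf t
    ⟨hα0.le.trans ht.1, ht.2⟩
  have hdecay : exp (-(Λ * (t - 0))) < ε := by
    rw [← exp_log hε, exp_lt_exp, sub_zero]
    nlinarith [neg_abs_le (log ε), mul_le_mul_of_nonneg_left ht.1 hΛ0.le]
  linarith

/-- Turnpike theorem: if the rates `A, B` are both uniformly close to a large
constant `Λ` on `[0, T−α]`, then the solution of `f₁' = A(1−f₁) − B f₁` with
`f₁(0) ∈ [0,1]` is within `ε` of `1/2` on `[α, T−α]`. -/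
theorem stmt_12 (T α : ℝ) (hT : 0 < T) (hα : α ∈ Set.Ioo 0 (T / 2)) :
    ∀ ε > (0 : ℝ), ∃ Λ₀ > (0 : ℝ), ∃ δ > (0 : ℝ), ∀ Λ : ℝ, Λ₀ ≤ Λ →
      ∀ A B : ℝ → ℝ,
        ContinuousOn A (Set.Icc 0 T) → ContinuousOn B (Set.Icc 0 T) →
        (∀ t ∈ Set.Icc (0 : ℝ) (T - α), |A t / Λ - 1| ≤ δ) →
        (∀ t ∈ Set.Icc (0 : ℝ) (T - α), |B t / Λ - 1| ≤ δ) →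
        ∀ f₁ : ℝ → ℝ, f₁ 0 ∈ Set.Icc (0 : ℝ) 1 →
          (∀ t ∈ Set.Icc (0 : ℝ) (T - α),
            HasDerivAt f₁ (A t * (1 - f₁ t) - B t * f₁ t) t) →
          ∀ t ∈ Set.Icc α (T - α), |f₁ t - 1 / 2| < ε :=
  stmt_12_general T α hα
end

section
/- Let λ, μ > 0, z > 0, x ∈ ℝ, y ≠ 0, T ∈ ℝ, and set δ = √( (μ−λ)² + 4 μ λ z ) and à = [[λ, −μ z/y], [−λ y, μ]]. Then e^{(λ+μ)T/2} · (1, 1) · exp(−à T) · (1, xy)ᵀ = (1 + xy) cosh(δT/2) + (1/δ) [ 2 y λ + 2 x z μ + (μ−λ)(1 − xy) ] sinh(δT/2). -/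
/-!
Shifting by half the trace, `A = ((λ + μ) / 2) • 1 + B` with
`B = [[(λ − μ)/2, −μz/y], [−λy, (μ − λ)/2]]`, and Cayley–Hamilton for the traceless `B` gives
`B * B = (δ/2)² • 1`. Hence the even and odd parts of the exponential series of `−T • B` are the
series of `cosh (δT/2)` and `sinh (δT/2)`, while the scalar part contributes `e^{−(λ+μ)T/2}`,
which cancels the prefactor.
-/

open Matrix

theorem NormedSpace.exp_smul_eq_cosh_add_sinh_of_mul_self_eq {𝔸 : Type*} [Ring 𝔸]
    [Algebra ℝ 𝔸] [TopologicalSpace 𝔸] [IsTopologicalRing 𝔸] [ContinuousSMul ℝ 𝔸] [T2Space 𝔸]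
    {b : 𝔸} {c : ℝ} (hc : c ≠ 0) (hb : b * b = c ^ 2 • (1 : 𝔸)) (t : ℝ) :
    NormedSpace.exp (t • b) = Real.cosh (t * c) • (1 : 𝔸) + (Real.sinh (t * c) / c) • b := by
  have hsq : (t • b) ^ 2 = (t * c) ^ 2 • (1 : 𝔸) := by
    rw [sq, smul_mul_smul_comm, hb, smul_smul, mul_pow, sq t]
  have heven (n : ℕ) : (t • b) ^ (2 * n) = (t * c) ^ (2 * n) • (1 : 𝔸) := by
    rw [pow_mul, hsq, smul_pow, one_pow, ← pow_mul]
  have hodd (n : ℕ) : (t • b) ^ (2 * n + 1) = ((t * c) ^ (2 * n + 1) / c) • b := by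
    rw [pow_succ, heven, smul_one_mul, smul_smul, pow_succ]
    congr 1
    field_simp
  rw [NormedSpace.exp_eq_tsum ℝ]
  refine HasSum.tsum_eq (HasSum.even_add_odd ?_ ?_)
  · convert (Real.hasSum_cosh (t * c)).smul_const (1 : 𝔸) using 2 with n
    rw [heven, smul_smul, inv_mul_eq_div]
  · convert ((Real.hasSum_sinh (t * c)).div_const c).smul_const b using 2 with n
    rw [hodd, smul_smul]
    ring_nf

theorem Matrix.mul_self_traceless_fin_two {R : Type*} [CommRing R] (a b c : R) :
    !![a, b; c, -a] * !![a, b; c, -a] = (a ^ 2 + b * c) • (1 : Matrix (Fin 2) (Fin 2) R) := by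
  ext i j
  fin_cases i <;> fin_cases j <;> simp <;> ring

theorem Matrix.exp_smul_one_add {m : Type*} [Fintype m] [DecidableEq m] (r : ℝ)
    (M : Matrix m m ℝ) :
    NormedSpace.exp (r • (1 : Matrix m m ℝ) + M) = Real.exp r • NormedSpace.exp M := by
  rw [Matrix.exp_add_of_commute _ _ ((Commute.one_left M).smul_left r), smul_one_eq_diagonal,
    Matrix.exp_diagonal, Pi.exp_def, ← Real.exp_eq_exp_ℝ, ← smul_one_eq_diagonal, smul_one_mul]

/-- Closed form of the per-atom generating function
`f_T(x,y,z) = e^{(λ+μ)T/2} (1,1) e^{−Ã T} (1,xy)ᵀ`. -/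
theorem stmt_14 (lam mu z x y T : ℝ) (hlam : 0 < lam) (hmu : 0 < mu) (hz : 0 < z)
    (hy : y ≠ 0)
    (δ : ℝ) (hδ : δ = Real.sqrt ((mu - lam) ^ 2 + 4 * mu * lam * z))
    (A : Matrix (Fin 2) (Fin 2) ℝ) (hA : A = !![lam, -(mu * z / y); -(lam * y), mu]) :
    Real.exp ((lam + mu) * T / 2) *
      (![1, 1] ⬝ᵥ (NormedSpace.exp (-(T • A))).mulVec ![1, x * y]) =
    (1 + x * y) * Real.cosh (δ * T / 2) +
      (1 / δ) * (2 * y * lam + 2 * x * z * mu + (mu - lam) * (1 - x * y)) *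
        Real.sinh (δ * T / 2) := by
  have hδpos : 0 < δ := hδ ▸ Real.sqrt_pos.mpr (by positivity)
  have hδsq : δ ^ 2 = (mu - lam) ^ 2 + 4 * mu * lam * z := hδ ▸ Real.sq_sqrt (by positivity)
  set B : Matrix (Fin 2) (Fin 2) ℝ :=
    !![(lam - mu) / 2, -(mu * z / y); -(lam * y), -((lam - mu) / 2)] with hB
  have hBsq : B * B = (δ / 2) ^ 2 • (1 : Matrix (Fin 2) (Fin 2) ℝ) := by
    rw [hB, mul_self_traceless_fin_two, div_pow δ, hδsq]
    congr 1
    field_simp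
    ring
  have hsplit :
      -(T • A) = (-((lam + mu) * T / 2)) • (1 : Matrix (Fin 2) (Fin 2) ℝ) + (-T) • B := by
    subst hA
    ext i j
    fin_cases i <;> fin_cases j <;> simp [hB] <;> ring
  have hpairing : ![1, 1] ⬝ᵥ B *ᵥ ![1, x * y] =
      -(y * lam + x * z * mu + (mu - lam) * (1 - x * y) / 2) := by
    simp only [hB, mulVec_fin_two, of_apply, cons_val', cons_val_zero, cons_val_one,
      cons_val_fin_one, dotProduct_cons, head_cons, tail_cons, dotProduct_of_isEmpty]
    field_simp
    ring
  rw [hsplit, Matrix.exp_smul_one_add,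
    NormedSpace.exp_smul_eq_cosh_add_sinh_of_mul_self_eq (by positivity) hBsq,
    smul_mulVec, dotProduct_smul, smul_eq_mul, ← mul_assoc, ← Real.exp_add, add_neg_cancel,
    Real.exp_zero, one_mul, show -T * (δ / 2) = -(δ * T / 2) by ring, Real.cosh_neg,
    Real.sinh_neg, add_mulVec, smul_mulVec, smul_mulVec, one_mulVec, dotProduct_add,
    dotProduct_smul, dotProduct_smul, hpairing]
  simp only [dotProduct_cons, head_cons, tail_cons, dotProduct_of_isEmpty, smul_eq_mul]
  field_simp
  ring
end

section
/- Let z > 0, x ∈ ℝ, y ≠ 0, T ∈ ℝ. With λ = μ = 1, Ã = [[1, −z/y], [−y, 1]], x̃ = x√z and ỹ = y/√z, one has e^{T} · (1, 1) · exp(−Ã T) · (1, xy)ᵀ = (1/2) [ (1 + ỹ)(1 + x̃) e^{√z · T} + (1 − ỹ)(1 − x̃) e^{−√z · T} ]. -/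
open Matrix

/-!
Write `Ã = 1 + B` with `B = !![0, -z/y; -y, 0]`. Since `B² = z`, the even and odd parts of the
exponential series of `B` sum to `cosh` and `sinh`, so
`exp (-T Ã) = e^{-T} (cosh (√z T) - sinh (√z T) / √z • B)`; pairing with `(1, 1)` and `(1, xy)`
and expanding `cosh`, `sinh` into `e^{±√z T}` gives the formula.
-/

namespace NormedSpace

variable {𝔸 : Type*} [NormedRing 𝔸] [NormedAlgebra ℝ 𝔸]

theorem exp_smul_eq_cosh_add_sinh_of_sq {b : 𝔸} {c : ℝ} (hc : c ≠ 0) (hb : b ^ 2 = c ^ 2 • 1)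
    (t : ℝ) : exp (t • b) = Real.cosh (t * c) • 1 + (Real.sinh (t * c) / c) • b := by
  have hb_even (n : ℕ) : b ^ (2 * n) = c ^ (2 * n) • 1 := by
    rw [pow_mul, hb, smul_pow, one_pow, ← pow_mul]
  rw [exp_eq_tsum ℝ]
  refine HasSum.tsum_eq (HasSum.even_add_odd ?_ ?_)
  · convert (Real.hasSum_cosh (t * c)).smul_const (1 : 𝔸) using 2 with n
    rw [smul_pow, hb_even, smul_smul, smul_smul, mul_pow]
    ring_nf
  · convert ((Real.hasSum_sinh (t * c)).div_const c).smul_const b using 2 with n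
    rw [smul_pow, pow_succ b, hb_even, smul_mul_assoc, one_mul, smul_smul, smul_smul]
    congr 1
    field_simp
    ring

theorem exp_smul_one_add_eq_of_sq [CompleteSpace 𝔸] {b : 𝔸} {c : ℝ} (hc : c ≠ 0)
    (hb : b ^ 2 = c ^ 2 • 1) (t : ℝ) :
    exp (t • (1 + b)) =
      Real.exp t • (Real.cosh (t * c) • 1 + (Real.sinh (t * c) / c) • b) := by
  let : NormedAlgebra ℚ 𝔸 := .restrictScalars ℚ ℝ 𝔸
  have hcomm : Commute (t • (1 : 𝔸)) (t • b) := ((Commute.one_left b).smul_left t).smul_right t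
  rw [smul_add, exp_add_of_commute hcomm, exp_smul_eq_cosh_add_sinh_of_sq hc hb,
    ← Algebra.algebraMap_eq_smul_one, ← algebraMap_exp_comm, ← Real.exp_eq_exp_ℝ, ← Algebra.smul_def]

end NormedSpace

theorem Matrix.fin_two_offDiag_sq {R : Type*} [CommRing R] (a b : R) :
    !![0, a; b, 0] ^ 2 = (a * b) • (1 : Matrix (Fin 2) (Fin 2) R) := by
  ext i j
  fin_cases i <;> fin_cases j <;> simp [sq, mul_comm]

theorem Matrix.exp_smul_one_add_eq_of_sq {m : Type*} [Fintype m] [DecidableEq m]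
    {B : Matrix m m ℝ} {c : ℝ} (hc : c ≠ 0) (hB : B ^ 2 = c ^ 2 • 1) (t : ℝ) :
    NormedSpace.exp (t • (1 + B)) =
      Real.exp t • (Real.cosh (t * c) • 1 + (Real.sinh (t * c) / c) • B) :=
  open scoped Norms.Operator in NormedSpace.exp_smul_one_add_eq_of_sq hc hB t

/-- The symmetric case `λ = μ = 1`: closed form of the per-atom generating function
in terms of `x̃ = x√z` and `ỹ = y/√z`. -/
theorem stmt_15 (z x y T : ℝ) (hz : 0 < z) (hy : y ≠ 0)
    (A : Matrix (Fin 2) (Fin 2) ℝ) (hA : A = !![1, -(z / y); -y, 1])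
    (xt yt : ℝ) (hxt : xt = x * Real.sqrt z) (hyt : yt = y / Real.sqrt z) :
    Real.exp T * (![1, 1] ⬝ᵥ (NormedSpace.exp (-(T • A))).mulVec ![1, x * y]) =
    (1 / 2) * ((1 + yt) * (1 + xt) * Real.exp (Real.sqrt z * T) +
      (1 - yt) * (1 - xt) * Real.exp (-(Real.sqrt z * T))) := by
  set s := Real.sqrt z
  have hs : s ≠ 0 := (Real.sqrt_pos.mpr hz).ne'
  set B : Matrix (Fin 2) (Fin 2) ℝ := !![0, -(z / y); -y, 0]
  have hB : B ^ 2 = s ^ 2 • 1 := by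
    rw [Matrix.fin_two_offDiag_sq, Real.sq_sqrt hz.le]
    field_simp
  have hAB : -(T • A) = (-T) • (1 + B) := by
    rw [hA, neg_smul, neg_inj]
    congr 1
    ext i j
    fin_cases i <;> fin_cases j <;> simp [B]
  have hBv (a b : ℝ) :
      ![1, 1] ⬝ᵥ (a • 1 + b • B) *ᵥ ![1, x * y] = a * (1 + x * y) - b * (z * x + y) := by
    simp [B, mulVec, dotProduct, Fin.sum_univ_two]
    field_simp
    ring
  rw [hAB, Matrix.exp_smul_one_add_eq_of_sq hs hB, smul_mulVec, dotProduct_smul, hBv,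
    smul_eq_mul, ← mul_assoc, ← Real.exp_add, add_neg_cancel, Real.exp_zero, one_mul, neg_mul,
    Real.cosh_neg, Real.sinh_neg, Real.cosh_eq, Real.sinh_eq, hxt, hyt, mul_comm T s]
  have hz' : z = s ^ 2 := (Real.sq_sqrt hz.le).symm
  rw [hz']
  field_simp
  ring
end

section
/- Let λ, μ > 0, z > 0, x ∈ ℝ, y ≠ 0, 0 ≤ t ≤ T, and set δ = √( (μ−λ)² + 4 μ λ z ), Ã = [[λ, −μ z/y], [−λ y, μ]], and n̂ = [[0,0],[0,1]]. Then e^{(λ+μ)T/2} · (1, 1) · exp(−Ã (T−t)) · n̂ · exp(−Ã t) · (1, xy)ᵀ = [ y cosh(δ(T−t)/2) + ((2 z μ − y(μ−λ))/δ) sinh(δ(T−t)/2) ] · [ x cosh(δt/2) + ((2 λ − x(μ−λ))/δ) sinh(δt/2) ]. -/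
/-!
Split `Ã = ((λ + μ) / 2) • 1 + B` with `B` traceless. By Cayley–Hamilton `B ^ 2 = (δ / 2) ^ 2 • 1`,
so the exponential series of `s • B` separates into its even and odd parts, the series of
`cosh` and `sinh`, and `exp (-(s • Ã)) = e^{-(λ+μ)s/2} (cosh (δs/2) • 1 - (2 sinh (δs/2) / δ) • B)`.
Since `n̂` is the rank-one projector onto the second basis vector, the matrix element factors as
(second column sum of `exp (-((T - t) • Ã))`) · (second row of `exp (-(t • Ã))` applied to
`(1, xy)`); the prefactor `e^{(λ+μ)T/2}` cancels the scalar exponentials.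
-/

open Matrix NormedSpace

theorem exp_smul_eq_cosh_add_sinh_of_sq_eq {𝔸 : Type*} [Ring 𝔸] [Algebra ℝ 𝔸]
    [TopologicalSpace 𝔸] [IsTopologicalRing 𝔸] [ContinuousSMul ℝ 𝔸] [T2Space 𝔸]
    {b : 𝔸} {c : ℝ} (hc : c ≠ 0) (hb : b ^ 2 = algebraMap ℝ 𝔸 (c ^ 2)) (s : ℝ) :
    exp (s • b) = algebraMap ℝ 𝔸 (Real.cosh (s * c)) + (Real.sinh (s * c) / c) • b := by
  have hpow_even : ∀ n, (s • b) ^ (2 * n) = algebraMap ℝ 𝔸 ((s * c) ^ (2 * n)) := fun n => by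
    rw [smul_pow, pow_mul b, hb, ← map_pow, ← pow_mul, Algebra.smul_def, ← map_mul, ← mul_pow]
  rw [exp_eq_tsum ℝ]
  refine HasSum.tsum_eq (HasSum.even_add_odd ?_ ?_)
  · convert (Real.hasSum_cosh (s * c)).smul_const (1 : 𝔸) using 1
    · ext n
      rw [hpow_even, Algebra.algebraMap_eq_smul_one, smul_smul, div_eq_inv_mul]
    · rw [Algebra.algebraMap_eq_smul_one]
  · convert ((Real.hasSum_sinh (s * c)).div_const c).smul_const b using 1
    ext n
    rw [pow_succ, hpow_even, ← Algebra.smul_def, smul_smul, smul_smul, pow_succ]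
    congr 1
    field_simp

namespace Matrix

theorem sub_trace_div_two_smul_one_sq {K : Type*} [Field K] [NeZero (2 : K)]
    (A : Matrix (Fin 2) (Fin 2) K) :
    (A - (A.trace / 2) • 1) ^ 2 = algebraMap K _ (A.discr / 2 ^ 2) := by
  ext i j
  fin_cases i <;> fin_cases j <;>
    simp only [sq, mul_apply, Fin.sum_univ_two, sub_apply, smul_apply,
      Algebra.algebraMap_eq_smul_one, one_apply_eq, one_apply_ne zero_ne_one,
      one_apply_ne one_ne_zero, trace_fin_two, discr_fin_two, det_fin_two, smul_eq_mul,
      Fin.zero_eta, Fin.mk_one] <;>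
    field_simp <;> ring

theorem exp_algebraMap {n : Type*} [Fintype n] [DecidableEq n] (r : ℝ) :
    exp (algebraMap ℝ (Matrix n n ℝ) r) = algebraMap ℝ _ (Real.exp r) := by
  rw [algebraMap_eq_diagonal, exp_diagonal, ← algebraMap_exp_comm, Real.exp_eq_exp_ℝ,
    algebraMap_eq_diagonal]

theorem exp_smul_fin_two (A : Matrix (Fin 2) (Fin 2) ℝ) {δ : ℝ} (hδ : δ ≠ 0)
    (hδA : δ ^ 2 = A.discr) (s : ℝ) :
    exp (s • A) = Real.exp (s * A.trace / 2) •
      (algebraMap ℝ _ (Real.cosh (s * δ / 2)) +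
        (2 * Real.sinh (s * δ / 2) / δ) • (A - (A.trace / 2) • 1)) := by
  set B := A - (A.trace / 2) • 1 with hB_def
  have hB : B ^ 2 = algebraMap ℝ _ ((δ / 2) ^ 2) := by
    rw [sub_trace_div_two_smul_one_sq, div_pow, hδA]
  have hsplit : s • A = algebraMap ℝ _ (s * A.trace / 2) + s • B := by
    rw [hB_def, Algebra.algebraMap_eq_smul_one]; module
  rw [hsplit, exp_add_of_commute _ _ (Algebra.commute_algebraMap_left _ _),
    exp_smul_eq_cosh_add_sinh_of_sq_eq (div_ne_zero hδ two_ne_zero) hB,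
    exp_algebraMap, ← Algebra.smul_def, ← mul_div_assoc]
  congr 3
  field_simp

theorem dotProduct_mul_single_mul_mulVec {R m n p : Type*} [CommSemiring R] [Fintype m]
    [Fintype n] [Fintype p] [DecidableEq n] (u : m → R) (M : Matrix m n R) (j : n)
    (N : Matrix n p R) (v : p → R) :
    u ⬝ᵥ (M * single j j (1 : R) * N) *ᵥ v = (u ᵥ* M) j * (N *ᵥ v) j := by
  rw [← mulVec_mulVec, ← mulVec_mulVec, single_mulVec_eq, mulVec_smul, dotProduct_smul,
    dotProduct_mulVec, dotProduct_single, one_mul, mul_one, smul_eq_mul, mul_comm]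

end Matrix

theorem stmt_16_general (lam mu z x y t T : ℝ) (hlam : 0 < lam) (hmu : 0 < mu) (hz : 0 < z)
    (hy : y ≠ 0)
    (δ : ℝ) (hδ : δ = Real.sqrt ((mu - lam) ^ 2 + 4 * mu * lam * z))
    (A : Matrix (Fin 2) (Fin 2) ℝ) (hA : A = !![lam, -(mu * z / y); -(lam * y), mu])
    (nhat : Matrix (Fin 2) (Fin 2) ℝ) (hn : nhat = !![0, 0; 0, 1]) :
    Real.exp ((lam + mu) * T / 2) *
      (![1, 1] ⬝ᵥ
        (NormedSpace.exp (-((T - t) • A)) * nhat *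
          NormedSpace.exp (-(t • A))).mulVec ![1, x * y]) =
    (y * Real.cosh (δ * (T - t) / 2) +
        (2 * z * mu - y * (mu - lam)) / δ * Real.sinh (δ * (T - t) / 2)) *
      (x * Real.cosh (δ * t / 2) +
        (2 * lam - x * (mu - lam)) / δ * Real.sinh (δ * t / 2)) := by
  have hδ_pos : 0 < δ := hδ ▸ Real.sqrt_pos.mpr (by positivity)
  have htrace : A.trace = lam + mu := by rw [hA, trace_fin_two_of]
  have hdiscr : δ ^ 2 = A.discr := by
    rw [hδ, Real.sq_sqrt (by positivity), discr_fin_two, htrace, hA, det_fin_two_of]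
    field_simp
    ring
  have hnhat : nhat = single 1 1 1 := by
    rw [hn]; ext i j; fin_cases i <;> fin_cases j <;> rfl
  have hexp : Real.exp ((lam + mu) * T / 2) *
      (Real.exp (-(T - t) * (lam + mu) / 2) * Real.exp (-t * (lam + mu) / 2)) = 1 := by
    rw [← Real.exp_add, ← Real.exp_add, Real.exp_eq_one_iff]; ring
  rw [← neg_smul, ← neg_smul, exp_smul_fin_two A hδ_pos.ne' hdiscr,
    exp_smul_fin_two A hδ_pos.ne' hdiscr, htrace, hnhat, dotProduct_mul_single_mul_mulVec]
  rw [vecMul_smul, smul_mulVec, Pi.smul_apply, Pi.smul_apply, smul_eq_mul, smul_eq_mul,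
    mul_mul_mul_comm, ← mul_assoc, hexp, one_mul]
  rw [show -(T - t) * δ / 2 = -(δ * (T - t) / 2) by ring,
    show -t * δ / 2 = -(δ * t / 2) by ring, Real.cosh_neg, Real.cosh_neg, Real.sinh_neg,
    Real.sinh_neg]
  simp only [vecMul, mulVec, dotProduct, Fin.sum_univ_two, hA, Algebra.algebraMap_eq_smul_one,
    Matrix.add_apply, Matrix.smul_apply, Matrix.sub_apply, one_apply_eq, one_apply_ne zero_ne_one,
    one_apply_ne one_ne_zero, of_apply, cons_val_zero, cons_val_one, cons_val_fin_one,
    smul_eq_mul]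
  field_simp
  ring

/-- Closed form of the per-atom matrix element
`(1,1) e^{−Ã(T−t)} n̂ e^{−Ã t} (1,xy)ᵀ` giving the conditional number of excited
atoms at an intermediate time `t`. -/
theorem stmt_16 (lam mu z x y t T : ℝ) (hlam : 0 < lam) (hmu : 0 < mu) (hz : 0 < z)
    (hy : y ≠ 0) (ht0 : 0 ≤ t) (htT : t ≤ T)
    (δ : ℝ) (hδ : δ = Real.sqrt ((mu - lam) ^ 2 + 4 * mu * lam * z))
    (A : Matrix (Fin 2) (Fin 2) ℝ) (hA : A = !![lam, -(mu * z / y); -(lam * y), mu])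
    (nhat : Matrix (Fin 2) (Fin 2) ℝ) (hn : nhat = !![0, 0; 0, 1]) :
    Real.exp ((lam + mu) * T / 2) *
      (![1, 1] ⬝ᵥ
        (NormedSpace.exp (-((T - t) • A)) * nhat *
          NormedSpace.exp (-(t • A))).mulVec ![1, x * y]) =
    (y * Real.cosh (δ * (T - t) / 2) +
        (2 * z * mu - y * (mu - lam)) / δ * Real.sinh (δ * (T - t) / 2)) *
      (x * Real.cosh (δ * t / 2) +
        (2 * lam - x * (mu - lam)) / δ * Real.sinh (δ * t / 2)) :=
  stmt_16_general lam mu z x y t T hlam hmu hz hy δ hδ A hA nhat hn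
end

section
/- Let λ, μ > 0, x > 0, y > 0, z > 0, c ∈ (0,1), and set δ = √( (μ−λ)² + 4 μ λ z ). Define, for T > 0, g_T(x,y,z,cT) = [ y cosh(δ(1−c)T/2) + ((2zμ − y(μ−λ))/δ) sinh(δ(1−c)T/2) ] · [ x cosh(δcT/2) + ((2λ − x(μ−λ))/δ) sinh(δcT/2) ] / ( (1+xy) cosh(δT/2) + (1/δ)[ 2yλ + 2xzμ + (μ−λ)(1−xy) ] sinh(δT/2) ). Then lim_{T → ∞} g_T(x,y,z,cT) = (1/2) ( 1 + (λ−μ)/δ ). In particular the limit depends neither on x nor on y. -/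
open Filter Real

private lemma cosh_exp_lim :
    Tendsto (fun t : ℝ => Real.cosh t * Real.exp (-t)) atTop (nhds (1/2)) := by
  have h : ∀ t : ℝ, Real.cosh t * Real.exp (-t) = 1/2 + Real.exp (-(2*t)) / 2 := by
    intro t
    have e1 : Real.exp t * Real.exp (-t) = 1 := by rw [← Real.exp_add]; simp
    have e2 : Real.exp (-t) * Real.exp (-t) = Real.exp (-(2*t)) := by
      rw [← Real.exp_add]; ring_nf
    rw [Real.cosh_eq]
    calc (Real.exp t + Real.exp (-t)) / 2 * Real.exp (-t)
        = (Real.exp t * Real.exp (-t) + Real.exp (-t) * Real.exp (-t)) / 2 := by ring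
      _ = 1/2 + Real.exp (-(2*t)) / 2 := by rw [e1, e2]; ring
  simp only [h]
  have h0 : Tendsto (fun t : ℝ => Real.exp (-(2*t))) atTop (nhds 0) := by
    apply Real.tendsto_exp_atBot.comp
    exact tendsto_neg_atBot_iff.mpr (tendsto_id.const_mul_atTop two_pos)
  simpa using tendsto_const_nhds.add (h0.div_const 2)

private lemma sinh_exp_lim :
    Tendsto (fun t : ℝ => Real.sinh t * Real.exp (-t)) atTop (nhds (1/2)) := by
  have h : ∀ t : ℝ, Real.sinh t * Real.exp (-t) = 1/2 - Real.exp (-(2*t)) / 2 := by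
    intro t
    have e1 : Real.exp t * Real.exp (-t) = 1 := by rw [← Real.exp_add]; simp
    have e2 : Real.exp (-t) * Real.exp (-t) = Real.exp (-(2*t)) := by
      rw [← Real.exp_add]; ring_nf
    rw [Real.sinh_eq]
    calc (Real.exp t - Real.exp (-t)) / 2 * Real.exp (-t)
        = (Real.exp t * Real.exp (-t) - Real.exp (-t) * Real.exp (-t)) / 2 := by ring
      _ = 1/2 - Real.exp (-(2*t)) / 2 := by rw [e1, e2]; ring
  simp only [h]
  have h0 : Tendsto (fun t : ℝ => Real.exp (-(2*t))) atTop (nhds 0) := by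
    apply Real.tendsto_exp_atBot.comp
    exact tendsto_neg_atBot_iff.mpr (tendsto_id.const_mul_atTop two_pos)
  simpa using tendsto_const_nhds.sub (h0.div_const 2)

private lemma lin_lim (p q r : ℝ) (hr : 0 < r) :
    Tendsto (fun T : ℝ => (p * Real.cosh (r*T) + q * Real.sinh (r*T)) * Real.exp (-(r*T)))
      atTop (nhds ((p+q)/2)) := by
  have hT : Tendsto (fun T : ℝ => r*T) atTop atTop := tendsto_id.const_mul_atTop hr
  have h1 := (cosh_exp_lim.comp hT).const_mul p
  have h2 := (sinh_exp_lim.comp hT).const_mul q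
  have h3 := h1.add h2
  have feq : (fun T : ℝ => (p * Real.cosh (r*T) + q * Real.sinh (r*T)) * Real.exp (-(r*T)))
      = fun T : ℝ => p * ((fun t => Real.cosh t * Real.exp (-t)) (r*T))
          + q * ((fun t => Real.sinh t * Real.exp (-t)) (r*T)) := by
    funext T; simp; ring
  rw [feq]
  simp only [Function.comp_apply] at h3
  convert h3 using 2 <;> ring

/-- At intermediate times `t = cT`, the conditional density of excited atoms
converges, as `T → ∞`, to `(1/2)(1 + (λ−μ)/δ)`, independently of `x` and `y`. -/
theorem stmt_18 (lam mu x y z c : ℝ) (hlam : 0 < lam) (hmu : 0 < mu)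
    (hx : 0 < x) (hy : 0 < y) (hz : 0 < z) (hc : c ∈ Set.Ioo (0 : ℝ) 1)
    (δ : ℝ) (hδ : δ = Real.sqrt ((mu - lam) ^ 2 + 4 * mu * lam * z)) :
    Filter.Tendsto
      (fun T : ℝ =>
        ((y * Real.cosh (δ * (1 - c) * T / 2) +
            (2 * z * mu - y * (mu - lam)) / δ * Real.sinh (δ * (1 - c) * T / 2)) *
          (x * Real.cosh (δ * c * T / 2) +
            (2 * lam - x * (mu - lam)) / δ * Real.sinh (δ * c * T / 2))) /
        ((1 + x * y) * Real.cosh (δ * T / 2) +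
          (1 / δ) * (2 * y * lam + 2 * x * z * mu + (mu - lam) * (1 - x * y)) *
            Real.sinh (δ * T / 2)))
      Filter.atTop
      (nhds ((1 / 2) * (1 + (lam - mu) / δ))) := by
  obtain ⟨hc0, hc1⟩ := hc
  have h4 : 0 < 4*mu*lam*z := by nlinarith [mul_pos (mul_pos hmu hlam) hz]
  have hargpos : 0 < (mu - lam)^2 + 4*mu*lam*z := by nlinarith [sq_nonneg (mu - lam)]
  have hδ0 : 0 < δ := by rw [hδ]; exact Real.sqrt_pos.mpr hargpos
  have hδ2 : δ^2 = (mu - lam)^2 + 4*mu*lam*z := by rw [hδ]; exact Real.sq_sqrt hargpos.le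
  set A := (2 * z * mu - y * (mu - lam)) / δ with hA
  set B := (2 * lam - x * (mu - lam)) / δ with hB
  set C := (1 / δ) * (2 * y * lam + 2 * x * z * mu + (mu - lam) * (1 - x * y)) with hC
  set a := δ*(1-c)/2 with ha
  set b := δ*c/2 with hb
  have ha0 : 0 < a := by
    rw [ha]; have := mul_pos hδ0 (show (0:ℝ) < 1 - c by linarith); linarith
  have hb0 : 0 < b := by rw [hb]; positivity
  -- limits of pieces
  have l1 := lin_lim y A a ha0
  have l2 := lin_lim x B b hb0
  have l3 := lin_lim (1 + x*y) C (a+b) (by positivity)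
  -- denominator limit nonzero
  have habs : |lam - mu| < δ := by
    rw [hδ, show ((mu-lam)^2 : ℝ) = (lam-mu)^2 by ring, ← Real.sqrt_sq_eq_abs]
    exact Real.sqrt_lt_sqrt (sq_nonneg _) (by linarith)
  obtain ⟨hm1', hm2'⟩ := abs_lt.mp habs
  have hm1 : 0 < δ + (lam - mu) := by linarith
  have hm2 : 0 < δ - (lam - mu) := by linarith
  have hDne : ((1 + x*y) + C)/2 ≠ 0 := by
    have : 0 < (1 + x*y) + C := by
      rw [hC]
      have key : 0 < (1 + x*y)*δ + (2 * y * lam + 2 * x * z * mu + (mu - lam) * (1 - x * y)) := by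
        nlinarith [mul_pos (mul_pos hx hy) hm1, mul_pos hy hlam,
          mul_pos (mul_pos hx hz) hmu, hm2]
      have := div_pos key hδ0
      calc (0:ℝ) < ((1 + x*y)*δ + (2 * y * lam + 2 * x * z * mu + (mu - lam) * (1 - x * y)))/δ := this
        _ = (1 + x*y) + (1/δ) * (2 * y * lam + 2 * x * z * mu + (mu - lam) * (1 - x * y)) := by
            field_simp
    positivity
  have main0 := ((l1.mul l2).div l3 hDne)
  have main : Tendsto (fun T : ℝ =>
        ((y * Real.cosh (a*T) + A * Real.sinh (a*T)) * Real.exp (-(a*T)) *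
          ((x * Real.cosh (b*T) + B * Real.sinh (b*T)) * Real.exp (-(b*T)))) /
        (((1 + x*y) * Real.cosh ((a+b)*T) + C * Real.sinh ((a+b)*T)) * Real.exp (-((a+b)*T))))
      atTop (nhds ((y + A)/2 * ((x + B)/2) / ((1 + x*y + C)/2))) := main0
  -- rewrite function
  have feq : (fun T : ℝ =>
        ((y * Real.cosh (δ * (1 - c) * T / 2) + A * Real.sinh (δ * (1 - c) * T / 2)) *
          (x * Real.cosh (δ * c * T / 2) + B * Real.sinh (δ * c * T / 2))) /
        ((1 + x * y) * Real.cosh (δ * T / 2) + C * Real.sinh (δ * T / 2)))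
      = fun T : ℝ =>
        ((y * Real.cosh (a*T) + A * Real.sinh (a*T)) * Real.exp (-(a*T)) *
          ((x * Real.cosh (b*T) + B * Real.sinh (b*T)) * Real.exp (-(b*T)))) /
        (((1 + x*y) * Real.cosh ((a+b)*T) + C * Real.sinh ((a+b)*T)) * Real.exp (-((a+b)*T))) := by
    funext T
    have e1 : δ * (1 - c) * T / 2 = a * T := by rw [ha]; ring
    have e2 : δ * c * T / 2 = b * T := by rw [hb]; ring
    have e3 : δ * T / 2 = (a+b) * T := by rw [ha, hb]; ring
    rw [e1, e2, e3]
    have eexp : Real.exp (-(a*T)) * Real.exp (-(b*T)) = Real.exp (-((a+b)*T)) := by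
      rw [← Real.exp_add]; ring_nf
    rw [mul_mul_mul_comm, eexp]
    rw [mul_div_mul_right _ _ (Real.exp_ne_zero _)]
  rw [feq]
  convert main using 2
  -- value equality
  rw [eq_div_iff hDne, hA, hB, hC]
  field_simp
  linear_combination hδ2
end

section
/- Let λ, μ > 0, x > 0, y > 0, z > 0, c ∈ (0,1), and set δ = √( (μ−λ)² + 4 μ λ z ). Define, for T > 0, ḣ_T(x,y,z,cT) = z μ [ cosh(δ(1−c)T/2) + ((2yλ + μ − λ)/δ) sinh(δ(1−c)T/2) ] · [ x cosh(δcT/2) + ((2λ − x(μ−λ))/δ) sinh(δcT/2) ] / ( (1+xy) cosh(δT/2) + (1/δ)[ 2yλ + 2xzμ + (μ−λ)(1−xy) ] sinh(δT/2) ). Then lim_{T → ∞} ḣ_T(x,y,z,cT) = z λ μ / δ. In particular the limit depends neither on x nor on y, and for fixed λ, μ the map z ↦ zλμ/√((μ−λ)² + 4μλz) is strictly increasing on (0,∞), so ḣ*(z) ≠ ḣ*(1) for z ≠ 1. -/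
lemma aux_tendsto19 (p q : ℝ) (f : ℝ → ℝ) (hf : Filter.Tendsto f Filter.atTop Filter.atTop) :
    Filter.Tendsto (fun T => (p * Real.cosh (f T) + q * Real.sinh (f T)) * Real.exp (-(f T)))
      Filter.atTop (nhds ((p + q) / 2)) := by
  have hg : Filter.Tendsto (fun T => Real.exp (-(f T))) Filter.atTop (nhds 0) :=
    Real.tendsto_exp_atBot.comp (Filter.tendsto_neg_atTop_atBot.comp hf)
  have heq : ∀ T, (p * Real.cosh (f T) + q * Real.sinh (f T)) * Real.exp (-(f T))
      = (p + q) / 2 + (p - q) / 2 * (Real.exp (-(f T)) * Real.exp (-(f T))) := by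
    intro T
    rw [Real.cosh_eq, Real.sinh_eq, Real.exp_neg]
    field_simp
    ring
  simp only [heq]
  have := ((hg.mul hg).const_mul ((p - q) / 2)).const_add ((p + q) / 2)
  simpa using this

lemma aux_mono19 (lam mu : ℝ) (hlam : 0 < lam) (hmu : 0 < mu) :
    StrictMonoOn
      (fun w : ℝ => w * lam * mu / Real.sqrt ((mu - lam) ^ 2 + 4 * mu * lam * w))
      (Set.Ioi 0) := by
  intro a ha b hb hab
  simp only [Set.mem_Ioi] at ha hb
  have hda : 0 < (mu - lam) ^ 2 + 4 * mu * lam * a := by positivity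
  have hdb : 0 < (mu - lam) ^ 2 + 4 * mu * lam * b := by positivity
  have hsa : 0 < Real.sqrt ((mu - lam) ^ 2 + 4 * mu * lam * a) := Real.sqrt_pos.mpr hda
  have hsb : 0 < Real.sqrt ((mu - lam) ^ 2 + 4 * mu * lam * b) := Real.sqrt_pos.mpr hdb
  simp only
  rw [div_lt_div_iff₀ hsa hsb]
  have hkey : a * Real.sqrt ((mu - lam) ^ 2 + 4 * mu * lam * b)
      < b * Real.sqrt ((mu - lam) ^ 2 + 4 * mu * lam * a) := by
    have hsq : (a * Real.sqrt ((mu - lam) ^ 2 + 4 * mu * lam * b)) ^ 2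
        < (b * Real.sqrt ((mu - lam) ^ 2 + 4 * mu * lam * a)) ^ 2 := by
      rw [mul_pow, mul_pow, Real.sq_sqrt hda.le, Real.sq_sqrt hdb.le]
      nlinarith [mul_pos (mul_pos (mul_pos hmu hlam) (mul_pos ha hb)) (sub_pos.mpr hab),
        mul_nonneg (sq_nonneg (mu - lam)) (mul_pos (sub_pos.mpr hab) (by linarith : (0:ℝ) < a + b)).le]
    exact lt_of_pow_lt_pow_left₀ 2 (by positivity) hsq
  nlinarith [mul_pos hlam hmu, hkey, mul_pos hsa hsb]

/-- At intermediate times `t = cT`, the conditional radiation intensity converges,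
as `T → ∞`, to `zλμ/δ`, independently of `x` and `y`; moreover `z ↦ zλμ/δ(z)` is
strictly increasing on `(0,∞)`, so the limiting intensity differs from the
typical one (`z = 1`) whenever `z ≠ 1`. -/
theorem stmt_19 (lam mu x y z c : ℝ) (hlam : 0 < lam) (hmu : 0 < mu)
    (hx : 0 < x) (hy : 0 < y) (hz : 0 < z) (hc : c ∈ Set.Ioo (0 : ℝ) 1)
    (δ : ℝ) (hδ : δ = Real.sqrt ((mu - lam) ^ 2 + 4 * mu * lam * z)) :
    Filter.Tendsto
      (fun T : ℝ =>
        (z * mu *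
          (Real.cosh (δ * (1 - c) * T / 2) +
            (2 * y * lam + mu - lam) / δ * Real.sinh (δ * (1 - c) * T / 2)) *
          (x * Real.cosh (δ * c * T / 2) +
            (2 * lam - x * (mu - lam)) / δ * Real.sinh (δ * c * T / 2))) /
        ((1 + x * y) * Real.cosh (δ * T / 2) +
          (1 / δ) * (2 * y * lam + 2 * x * z * mu + (mu - lam) * (1 - x * y)) *
            Real.sinh (δ * T / 2)))
      Filter.atTop
      (nhds (z * lam * mu / δ)) ∧
    StrictMonoOn
      (fun w : ℝ => w * lam * mu / Real.sqrt ((mu - lam) ^ 2 + 4 * mu * lam * w))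
      (Set.Ioi 0) ∧
    (z ≠ 1 →
      z * lam * mu / Real.sqrt ((mu - lam) ^ 2 + 4 * mu * lam * z) ≠
      1 * lam * mu / Real.sqrt ((mu - lam) ^ 2 + 4 * mu * lam * 1)) := by
  have hmono := aux_mono19 lam mu hlam hmu
  refine ⟨?_, hmono, fun hzne heq => hzne ?_⟩
  · obtain ⟨hc0, hc1⟩ := hc
    have hδsq : δ ^ 2 = (mu - lam) ^ 2 + 4 * mu * lam * z := by
      rw [hδ]; exact Real.sq_sqrt (by positivity)
    have hδpos : 0 < δ := by
      rw [hδ]; exact Real.sqrt_pos.mpr (by positivity)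
    have hmlz : 0 < 4 * mu * lam * z := by positivity
    have h1 : mu - lam < δ := by nlinarith
    have h2 : lam - mu < δ := by nlinarith
    have hoc : 0 < 1 - c := by linarith
    set A := (2 * y * lam + mu - lam) / δ with hA
    set B := (2 * lam - x * (mu - lam)) / δ with hB
    set C := (1 / δ) * (2 * y * lam + 2 * x * z * mu + (mu - lam) * (1 - x * y)) with hC
    have hfa : Filter.Tendsto (fun T : ℝ => δ * (1 - c) * T / 2) Filter.atTop Filter.atTop :=
      (Filter.tendsto_id.const_mul_atTop (by positivity : (0:ℝ) < δ * (1 - c))).atTop_div_const two_pos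
    have hfb : Filter.Tendsto (fun T : ℝ => δ * c * T / 2) Filter.atTop Filter.atTop :=
      (Filter.tendsto_id.const_mul_atTop (by positivity : (0:ℝ) < δ * c)).atTop_div_const two_pos
    have hfd : Filter.Tendsto (fun T : ℝ => δ * T / 2) Filter.atTop Filter.atTop :=
      (Filter.tendsto_id.const_mul_atTop hδpos).atTop_div_const two_pos
    have hT1 := aux_tendsto19 1 A _ hfa
    have hT2 := aux_tendsto19 x B _ hfb
    have hT3 := aux_tendsto19 (1 + x * y) C _ hfd
    have hL3pos : 0 < ((1 + x * y) + C) / 2 := by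
      have key : 0 < δ * (1 + x * y) + (2 * y * lam + 2 * x * z * mu + (mu - lam) * (1 - x * y)) := by
        nlinarith [mul_pos hy hlam, mul_pos (mul_pos hx hz) hmu,
          mul_pos (mul_pos hx hy) (by linarith : 0 < δ - (mu - lam))]
      have : (1 + x * y) + C
          = (δ * (1 + x * y) + (2 * y * lam + 2 * x * z * mu + (mu - lam) * (1 - x * y))) / δ := by
        rw [hC]; field_simp
      rw [this]
      positivity
    have hmain := ((hT1.const_mul (z * mu)).mul hT2).div hT3 (ne_of_gt hL3pos)
    have hval : z * mu * ((1 + A) / 2) * ((x + B) / 2) / (((1 + x * y) + C) / 2)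
        = z * lam * mu / δ := by
      rw [div_eq_div_iff (ne_of_gt hL3pos) (ne_of_gt hδpos), hA, hB, hC]
      field_simp
      linear_combination x * hδsq
    rw [← hval]
    refine hmain.congr fun T => ?_
    have hexp : Real.exp (-(δ * (1 - c) * T / 2)) * Real.exp (-(δ * c * T / 2))
        = Real.exp (-(δ * T / 2)) := by
      rw [← Real.exp_add]; congr 1; ring
    have h1 : z * mu * ((1 * Real.cosh (δ * (1 - c) * T / 2) + A * Real.sinh (δ * (1 - c) * T / 2)) * Real.exp (-(δ * (1 - c) * T / 2))) * ((x * Real.cosh (δ * c * T / 2) + B * Real.sinh (δ * c * T / 2)) * Real.exp (-(δ * c * T / 2))) = (z * mu * (Real.cosh (δ * (1 - c) * T / 2) + A * Real.sinh (δ * (1 - c) * T / 2)) * (x * Real.cosh (δ * c * T / 2) + B * Real.sinh (δ * c * T / 2))) * Real.exp (-(δ * T / 2)) := by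
      rw [← hexp]; ring
    simp only [Pi.div_apply]
    rw [h1, mul_div_mul_right _ _ (Real.exp_ne_zero (-(δ * T / 2)))]
  · exact hmono.injOn (Set.mem_Ioi.mpr hz) (Set.mem_Ioi.mpr one_pos) heq
end
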